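/- arXiv:2603.28202 — 5 statements merged into one kernel-verified Lean document; each statement's English description precedes it below -/
import Mathlib

section
/- For every integer n > 4, there exists a 3-uniform hypergraph H on n vertices with minimum codegree δ₂(H) = ⌊3n/4⌋ − 2 that does not contain the square of a tight Hamilton cycle. -/
/-!
Colour the vertices by their residue mod 4, calling the classes of residues 0, 1, 2 the parts
A₀, A₁, A₂ and the class of residue 3 the part B, and remove every triple that meets B and two
vertices of one Aᵢ, and every triple meeting all three Aᵢ. For each pair of vertices the
removed triples through it lie in a single part, so the codegree is at least
n - 2 - ⌈n/4⌉ = ⌊3n/4⌋ - 2, with equality for a pair in A₁ × A₂.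

Four vertices with exactly one vertex in B always span a removed triple: either two of the other
three share a part Aᵢ, or they meet all three parts. So along the square of a tight Hamilton cycle
the number of B-vertices among four consecutive ones is never 1. As this number changes by at
most one per step, it is either always 0, impossible as B ≠ ∅, or always at least 2, which forces
4|B| ≥ 2n, contradicting |B| = ⌊n/4⌋.
-/

open Finset

-- Colour `3` is the part `B` and colours `0, 1, 2` are the parts `A₀, A₁, A₂`.
def IsForbiddenColouring (m : Multiset (Fin 4)) : Prop :=
  (3 ∈ m ∧ ∃ i ≠ 3, 2 ≤ m.count i) ∨ (0 ∈ m ∧ 1 ∈ m ∧ 2 ∈ m)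

instance : DecidablePred IsForbiddenColouring := fun _ => by
  unfold IsForbiddenColouring; infer_instance

lemma exists_forall_ne_not_isForbiddenColouring (a b : Fin 4) :
    ∃ k, ∀ c ≠ k, ¬ IsForbiddenColouring {a, b, c} := by
  revert a b; decide

lemma isForbiddenColouring_one_two_iff (c : Fin 4) :
    IsForbiddenColouring {1, 2, c} ↔ c = 0 := by
  revert c; decide

lemma isForbiddenColouring_of_ne_three (a b c : Fin 4) (ha : a ≠ 3) (hb : b ≠ 3) (hc : c ≠ 3) :
    IsForbiddenColouring {a, b, 3} ∨ IsForbiddenColouring {a, c, 3} ∨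
      IsForbiddenColouring {b, c, 3} ∨ IsForbiddenColouring {a, b, c} := by
  revert a b c; decide

lemma injOn_add_natCast_range {n m : ℕ} (hm : m ≤ n) (i : ZMod n) :
    Set.InjOn (fun j : ℕ => i + (j : ZMod n)) (range m) := by
  intro a ha b hb hab
  simp only [coe_range, Set.mem_Iio, add_right_inj, ZMod.natCast_eq_natCast_iff'] at ha hb hab
  rwa [Nat.mod_eq_of_lt (by omega), Nat.mod_eq_of_lt (by omega)] at hab

section CyclicWindow

variable {n : ℕ} (S : Finset (ZMod n)) (m : ℕ)

def cyclicWindowCount (i : ZMod n) : ℕ :=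
  ∑ j ∈ range m, if i + j ∈ S then 1 else 0

lemma cyclicWindowCount_add_one (i : ZMod n) :
    cyclicWindowCount S m (i + 1) + (if i ∈ S then 1 else 0) =
      cyclicWindowCount S m i + if i + m ∈ S then 1 else 0 := by
  have h := (sum_range_succ' (fun j => if i + j ∈ S then 1 else 0) m).symm.trans
    (sum_range_succ (fun j => if i + j ∈ S then 1 else 0) m)
  simpa only [cyclicWindowCount, Nat.cast_succ, Nat.cast_zero, add_zero, add_assoc,
    add_comm (1 : ZMod n)] using h

variable [NeZero n]

lemma sum_cyclicWindowCount : ∑ i, cyclicWindowCount S m i = m * #S := by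
  have shift (j : ℕ) : ∑ i : ZMod n, (if i + j ∈ S then 1 else 0) = #S :=
    (Equiv.sum_comp (Equiv.addRight (j : ZMod n)) (fun i => if i ∈ S then 1 else 0)).trans
      (by simp)
  simp only [cyclicWindowCount]
  rw [sum_comm, sum_congr rfl fun j _ => shift j, sum_const, card_range, smul_eq_mul]

variable {S m}

lemma cyclicWindowCount_eq_zero_of_ne_one (h : ∀ i, cyclicWindowCount S m i ≠ 1) {i₀ : ZMod n}
    (h₀ : cyclicWindowCount S m i₀ = 0) (i : ZMod n) : cyclicWindowCount S m i = 0 := by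
  have step (k : ℕ) : cyclicWindowCount S m (i₀ + k) = 0 := by
    induction k with
    | zero => simpa using h₀
    | succ k ih =>
      have := cyclicWindowCount_add_one S m (i₀ + k)
      have := h (i₀ + k + 1)
      rw [Nat.cast_succ, ← add_assoc]
      split_ifs at * <;> omega
  simpa using step (i - i₀).val

theorem eq_empty_or_two_mul_le_of_cyclicWindowCount_ne_one (hm : 0 < m)
    (h : ∀ i, cyclicWindowCount S m i ≠ 1) : S = ∅ ∨ 2 * n ≤ m * #S := by
  by_cases h₀ : ∃ i₀, cyclicWindowCount S m i₀ = 0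
  · obtain ⟨i₀, h₀⟩ := h₀
    left
    refine eq_empty_of_forall_notMem fun i hi => ?_
    have := cyclicWindowCount_eq_zero_of_ne_one h h₀ i
    simp only [cyclicWindowCount, sum_eq_zero_iff, mem_range, ite_eq_right_iff] at this
    exact one_ne_zero (this 0 hm (by simpa using hi))
  · right
    push Not at h₀
    calc 2 * n = ∑ _i : ZMod n, 2 := by simp [ZMod.card, mul_comm]
      _ ≤ ∑ i, cyclicWindowCount S m i := sum_le_sum fun i _ => by
          have := h₀ i; have := h i; omega
      _ = m * #S := sum_cyclicWindowCount S m

end CyclicWindow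

section ColourHypergraph

variable {V : Type*} [Fintype V] (χ : V → Fin 4)

def colourHypergraph : Finset (Finset V) :=
  {e ∈ univ.powersetCard 3 | ¬ IsForbiddenColouring (e.val.map χ)}

variable {χ}

lemma card_eq_three_of_mem_colourHypergraph {e : Finset V} (he : e ∈ colourHypergraph χ) :
    #e = 3 :=
  (mem_powersetCard.mp (mem_filter.mp he).1).2

variable [DecidableEq V]

lemma insert_insert_singleton_mem_colourHypergraph_iff {u v w : V} (huv : u ≠ v) :
    {u, v, w} ∈ colourHypergraph χ ↔
      w ≠ u ∧ w ≠ v ∧ ¬ IsForbiddenColouring {χ u, χ v, χ w} := by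
  by_cases hw : w = u ∨ w = v
  · have hcard : #({u, v, w} : Finset V) ≠ 3 := by
      rcases hw with rfl | rfl <;> simp [card_pair huv, card_pair huv.symm]
    exact iff_of_false (fun h => hcard (card_eq_three_of_mem_colourHypergraph h)) (by tauto)
  · push Not at hw
    have hcard : #({u, v, w} : Finset V) = 3 :=
      card_eq_three.mpr ⟨u, v, w, huv, hw.1.symm, hw.2.symm, rfl⟩
    simp [colourHypergraph, mem_powersetCard, hcard, hw, huv, hw.1.symm, hw.2.symm]

lemma card_sub_two_le_codegree_colourHypergraph {u v : V} (huv : u ≠ v) {m : ℕ}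
    (hm : ∀ k, #{w | χ w = k} ≤ m) :
    Fintype.card V - m - 2 ≤ #{w | {u, v, w} ∈ colourHypergraph χ} := by
  obtain ⟨k, hk⟩ := exists_forall_ne_not_isForbiddenColouring (χ u) (χ v)
  have hsub : (({w | χ w ≠ k} : Finset V).erase u).erase v ⊆
      ({w | {u, v, w} ∈ colourHypergraph χ} : Finset V) := by
    intro w hw
    simp only [mem_erase, mem_filter, mem_univ, true_and] at hw ⊢
    exact (insert_insert_singleton_mem_colourHypergraph_iff huv).mpr
      ⟨hw.2.1, hw.1, hk _ hw.2.2⟩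
  have hcompl : #({w | χ w ≠ k} : Finset V) = Fintype.card V - #{w | χ w = k} := by
    rw [filter_not, card_sdiff_of_subset (filter_subset _ _), card_univ]
  calc Fintype.card V - m - 2 ≤ #({w | χ w ≠ k} : Finset V) - 1 - 1 := by
        have := hm k; omega
    _ ≤ #((({w | χ w ≠ k} : Finset V).erase u).erase v) :=
        (Nat.sub_le_sub_right pred_card_le_card_erase 1).trans pred_card_le_card_erase
    _ ≤ _ := card_le_card hsub

lemma codegree_colourHypergraph_of_eq_one_of_eq_two {u v : V} (hu : χ u = 1) (hv : χ v = 2) :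
    #{w | {u, v, w} ∈ colourHypergraph χ} = Fintype.card V - #{w | χ w = 0} - 2 := by
  have huv : u ≠ v := fun h => by simp [h, hv] at hu
  have hlink : ({w | {u, v, w} ∈ colourHypergraph χ} : Finset V) =
      (({w | χ w ≠ 0} : Finset V).erase u).erase v := by
    ext w
    simp only [mem_erase, mem_filter, mem_univ, true_and,
      insert_insert_singleton_mem_colourHypergraph_iff huv, hu, hv,
      isForbiddenColouring_one_two_iff]
    tauto
  rw [hlink, card_erase_of_mem (by simp [hv, huv.symm]), card_erase_of_mem (by simp [hu]),
    filter_not, card_sdiff_of_subset (filter_subset _ _), card_univ]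
  omega

lemma not_forall_mem_colourHypergraph_of_mem {W : Finset V} {p : V} (hp : p ∈ W)
    (hp3 : χ p = 3) (hW : 3 ≤ #{v ∈ W | χ v ≠ 3}) :
    ¬ ∀ t ∈ W.powersetCard 3, t ∈ colourHypergraph χ := by
  intro hcl
  have forbidden {x y z : V} (hx : x ∈ W) (hy : y ∈ W) (hz : z ∈ W) (hxy : x ≠ y) (hxz : x ≠ z)
      (hyz : y ≠ z) : ¬ IsForbiddenColouring {χ x, χ y, χ z} := by
    have ht : {x, y, z} ∈ W.powersetCard 3 := mem_powersetCard.mpr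
      ⟨by simp [insert_subset_iff, hx, hy, hz], card_eq_three.mpr ⟨x, y, z, hxy, hxz, hyz, rfl⟩⟩
    exact ((insert_insert_singleton_mem_colourHypergraph_iff hxy).mp (hcl _ ht)).2.2
  obtain ⟨A, hAW, hA⟩ := exists_subset_card_eq hW
  obtain ⟨x, y, z, hxy, hxz, hyz, rfl⟩ := card_eq_three.mp hA
  simp only [insert_subset_iff, singleton_subset_iff, mem_filter] at hAW
  obtain ⟨⟨hx, hx3⟩, ⟨hy, hy3⟩, ⟨hz, hz3⟩⟩ := hAW
  have hne {a : V} (ha : χ a ≠ 3) : a ≠ p := fun h => ha (h ▸ hp3)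
  have := isForbiddenColouring_of_ne_three _ _ _ hx3 hy3 hz3
  rw [← hp3] at this
  rcases this with h | h | h | h
  · exact forbidden hx hy hp hxy (hne hx3) (hne hy3) h
  · exact forbidden hx hz hp hxz (hne hx3) (hne hz3) h
  · exact forbidden hy hz hp hyz (hne hy3) (hne hz3) h
  · exact forbidden hx hy hz hxy hxz hyz h

lemma card_filter_image_eq_cyclicWindowCount {n m : ℕ} (hm : m ≤ n) (f : ZMod n ≃ V) (i : ZMod n) :
    #{v ∈ (range m).image (fun j : ℕ => f (i + j)) | χ v = 3} =
      cyclicWindowCount (({v | χ v = 3} : Finset V).map f.symm.toEmbedding) m i := by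
  have hinj : Set.InjOn (fun j : ℕ => f (i + j)) (range m) :=
    f.injective.comp_injOn (injOn_add_natCast_range hm i)
  rw [card_filter, sum_image hinj]
  simp [cyclicWindowCount, mem_map_equiv]

lemma cyclicWindowCount_ne_one_of_forall_mem_colourHypergraph {n : ℕ} (hn : 4 ≤ n)
    (f : ZMod n ≃ V) (i : ZMod n)
    (hf : ∀ t ∈ powersetCard 3 {f i, f (i + 1), f (i + 2), f (i + 3)}, t ∈ colourHypergraph χ) :
    cyclicWindowCount (({v | χ v = 3} : Finset V).map f.symm.toEmbedding) 4 i ≠ 1 := by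
  have hwindow : ({f i, f (i + 1), f (i + 2), f (i + 3)} : Finset V) =
      (range 4).image (fun j : ℕ => f (i + j)) := by
    ext
    simp only [mem_insert, mem_singleton, range_add_one, range_zero, insert_empty_eq,
      image_insert, image_singleton, Nat.cast_ofNat, Nat.cast_one, Nat.cast_zero, add_zero]
    tauto
  rw [hwindow] at hf
  rw [← card_filter_image_eq_cyclicWindowCount hn]
  set W := (range 4).image (fun j : ℕ => f (i + j))
  have hW : #W = 4 :=
    (card_image_of_injOn (f.injective.comp_injOn (injOn_add_natCast_range hn i))).trans
      (card_range 4)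
  have hsplit : #{v ∈ W | χ v = 3} + #{v ∈ W | χ v ≠ 3} = #W :=
    card_filter_add_card_filter_not _
  intro h1
  obtain ⟨p, hp⟩ := card_eq_one.mp h1
  have hpW : p ∈ W ∧ χ p = 3 := mem_filter.mp (hp ▸ mem_singleton_self p)
  exact not_forall_mem_colourHypergraph_of_mem hpW.1 hpW.2 (by omega) hf

theorem not_exists_square_colourHypergraph {n : ℕ} (hn : 4 ≤ n) {v₃ : V} (hv₃ : χ v₃ = 3)
    (hB : 2 * #{v | χ v = 3} < n) :
    ¬ ∃ f : ZMod n ≃ V, ∀ i : ZMod n,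
      ∀ t ∈ powersetCard 3 {f i, f (i + 1), f (i + 2), f (i + 3)}, t ∈ colourHypergraph χ := by
  rintro ⟨f, hf⟩
  have : NeZero n := ⟨by omega⟩
  rcases eq_empty_or_two_mul_le_of_cyclicWindowCount_ne_one (by norm_num)
    fun i => cyclicWindowCount_ne_one_of_forall_mem_colourHypergraph hn f i (hf i) with h | h
  · exact (eq_empty_iff_forall_notMem.mp h) (f.symm v₃) (by simp [hv₃])
  · rw [card_map] at h
    omega

end ColourHypergraph

def residueMod4 {n : ℕ} (v : Fin n) : Fin 4 := Fin.ofNat 4 v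

lemma card_residueMod4_eq (n : ℕ) (k : Fin 4) :
    #{v : Fin n | residueMod4 v = k} = n / 4 + if (k : ℕ) < n % 4 then 1 else 0 := by
  have h := Nat.count_modEq_card n (r := 4) (by norm_num) k
  rw [Nat.count_eq_card_filter_range, Nat.mod_eq_of_lt k.isLt, ← Nat.Iio_eq_range,
    ← Fin.map_valEmbedding_univ, filter_map, card_map] at h
  rw [← h]
  congr! 2 with v
  simp [residueMod4, Fin.ext_iff, Nat.ModEq, Nat.mod_eq_of_lt k.isLt]

/-- For every `n > 4` there is a 3-graph on `n` vertices with minimum codegree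
`⌊3n/4⌋ - 2` containing no square of a tight Hamilton cycle. -/
theorem extremal_construction (n : ℕ) (hn : 4 < n) :
    ∃ E : Finset (Finset (Fin n)),
      (∀ e ∈ E, e.card = 3) ∧
      (∀ u v : Fin n, u ≠ v →
        3 * n / 4 - 2 ≤ (Finset.univ.filter fun w => ({u, v, w} : Finset (Fin n)) ∈ E).card) ∧
      (∃ u v : Fin n, u ≠ v ∧
        (Finset.univ.filter fun w => ({u, v, w} : Finset (Fin n)) ∈ E).card = 3 * n / 4 - 2) ∧
      ¬ ∃ f : ZMod n ≃ Fin n, ∀ i : ZMod n,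
          ∀ t ∈ Finset.powersetCard 3
            ({f i, f (i + 1), f (i + 2), f (i + 3)} : Finset (Fin n)), t ∈ E := by
  have hclass := card_residueMod4_eq n
  refine ⟨colourHypergraph residueMod4, fun e he => card_eq_three_of_mem_colourHypergraph he,
    fun u v huv => ?_, ⟨⟨1, by omega⟩, ⟨2, by omega⟩, by simp [Fin.ext_iff], ?_⟩,
    not_exists_square_colourHypergraph (v₃ := ⟨3, by omega⟩) hn.le rfl ?_⟩
  · have := card_sub_two_le_codegree_colourHypergraph huv (m := (n + 3) / 4) fun k => by
      rw [hclass]; split_ifs <;> omega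
    rw [Fintype.card_fin] at this
    omega
  · rw [codegree_colourHypergraph_of_eq_one_of_eq_two (χ := residueMod4) rfl rfl,
      Fintype.card_fin, hclass, Fin.val_zero]
    split_ifs <;> omega
  · rw [hclass, show ((3 : Fin 4) : ℕ) = 3 from rfl]
    split_ifs <;> omega
end

section
/- Let H be a 3-graph on n vertices with δ₂(H) > 7n/9. Then for every vertex v of H, there is no properly coloured copy of C₄ in the link graph L(v), where each edge {u,w} of L(v) is coloured by the tight component of 𝒯(H) containing the copies of K₄³ extending the edge {u,v,w}. (Properly coloured means consecutive edges of the 4-cycle have distinct colours.) -/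
/-!
Two edges `pq`, `qr` of the link `L(v)` get the same colour as soon as some vertex `x` makes
`{p, v, q, x}` and `{v, q, x, r}` tetrahedra: they share the face `vqx`, so one tight step joins
them. Let `abcd` be a properly coloured `C₄` in `L(v)` and write `N(uw)` for the neighbourhood
of the pair `uw`, which misses fewer than `2n/9` vertices. Then `S = N(bv) ∩ N(cv) ∩ N(ab) ∩ N(bc)`
and `T = N(cv) ∩ N(dv) ∩ N(cd) ∩ N(da)` each have more than `n/9` vertices. As `ab, bc` and
`cd, da` are coloured differently, `S` and `T` avoid `N(av)`, and as `bc, cd` are, `S ∩ T = ∅`.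
Hence `2n/9 < |S| + |T| ≤ n - |N(av)| < 2n/9`.
-/

open Finset

/-- The tetrahedral 4-graph of a 3-graph `E`: all 4-sets of vertices all of whose
3-element subsets are edges of `E`. -/
def tet {V : Type*} [Fintype V] [DecidableEq V] (E : Finset (Finset V)) :
    Finset (Finset V) :=
  (Finset.powersetCard 4 Finset.univ).filter fun K =>
    ∀ t ∈ Finset.powersetCard 3 K, t ∈ E

/-- There is a tight walk in the 4-graph `T` from the edge `e` to the edge `f`:
a vertex sequence starting with the vertices of `e`, ending with the vertices of
`f`, in which every 4 consecutive vertices form an edge of `T`. -/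
def TightConn {V : Type*} [DecidableEq V] (T : Finset (Finset V))
    (e f : Finset V) : Prop :=
  ∃ l : List V, 4 ≤ l.length ∧ (l.take 4).toFinset = e ∧
    (l.drop (l.length - 4)).toFinset = f ∧
    ∀ i, i + 4 ≤ l.length → ((l.drop i).take 4).toFinset ∈ T

/-- The edges `e` and `f` of the 3-graph `E` lie in the same tight component of
the tetrahedral graph `tet E`: some tetrahedron containing `e` is tightly
connected to some tetrahedron containing `f`. -/
def EdgeConn {V : Type*} [Fintype V] [DecidableEq V] (E : Finset (Finset V))
    (e f : Finset V) : Prop :=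
  ∃ K K', K ∈ tet E ∧ K' ∈ tet E ∧ e ⊆ K ∧ f ⊆ K' ∧ TightConn (tet E) K K'

/-- The edge `e` of the 3-graph `E` lies in the tight component of the
tetrahedron `K`. -/
def EdgeInComp {V : Type*} [Fintype V] [DecidableEq V] (E : Finset (Finset V))
    (e K : Finset V) : Prop :=
  ∃ K', K' ∈ tet E ∧ e ⊆ K' ∧ TightConn (tet E) K' K

namespace Finset

variable {α : Type*} [DecidableEq α]

theorem pairwise_ne_of_card_eq_three {x y z : α} (h : ({x, y, z} : Finset α).card = 3) :
    x ≠ y ∧ x ≠ z ∧ y ≠ z := by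
  obtain ⟨a, b, c, hab, hac, hbc, he⟩ := card_eq_three.1 h
  grind

theorem eq_triple_of_subset_of_card_eq_three {p q r s : α} {t : Finset α}
    (ht : t ⊆ {p, q, r, s}) (h3 : t.card = 3) :
    t = {p, q, r} ∨ t = {p, q, s} ∨ t = {p, r, s} ∨ t = {q, r, s} := by
  obtain ⟨a, b, c, hab, hac, hbc, rfl⟩ := card_eq_three.1 h3
  simp only [insert_subset_iff, mem_insert, mem_singleton, singleton_subset_iff] at ht
  grind

variable [Fintype α]

theorem card_compl_lt_sub {s : Finset α} {c : ℝ} (h : c < s.card) :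
    (sᶜ.card : ℝ) < Fintype.card α - c := by
  rw [card_compl, Nat.cast_sub (card_le_univ s)]
  linarith

theorem card_compl_inter_lt_add {s t : Finset α} {c d : ℝ} (hs : (sᶜ.card : ℝ) < c)
    (ht : (tᶜ.card : ℝ) < d) : ((s ∩ t)ᶜ.card : ℝ) < c + d := by
  rw [compl_inter]
  exact (Nat.cast_le.2 (card_union_le _ _)).trans_lt (by push_cast; linarith)

theorem not_disjoint_of_subset_of_card_lt {s t u : Finset α} (hs : s ⊆ u) (ht : t ⊆ u)
    (h : (sᶜ.card : ℝ) + tᶜ.card + u.card < 2 * Fintype.card α) : ¬ Disjoint s t := by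
  intro hst
  have hu := card_le_card (union_subset hs ht)
  rw [card_union_of_disjoint hst] at hu
  rw [card_compl, card_compl, Nat.cast_sub (card_le_univ s),
    Nat.cast_sub (card_le_univ t)] at h
  have : ((s.card + t.card : ℕ) : ℝ) ≤ u.card := Nat.cast_le.2 hu
  push_cast at this
  linarith

end Finset

theorem tightConn_step {V : Type*} [DecidableEq V] (T : Finset (Finset V)) {p q r s w : V}
    (h₁ : ({p, q, r, s} : Finset V) ∈ T) (h₂ : ({q, r, s, w} : Finset V) ∈ T) :
    TightConn T {p, q, r, s} {q, r, s, w} := by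
  refine ⟨[p, q, r, s, w], by simp, by simp, by simp, fun i hi => ?_⟩
  obtain rfl | rfl : i = 0 ∨ i = 1 := by simp only [List.length_cons, List.length_nil] at hi; omega
  · simpa using h₁
  · simpa using h₂

section Tetrahedra

variable {V : Type*} [Fintype V] [DecidableEq V] {E : Finset (Finset V)}

def pairNeighborFinset (E : Finset (Finset V)) (u v : V) : Finset V :=
  univ.filter fun w => ({u, v, w} : Finset V) ∈ E

@[simp]
theorem mem_pairNeighborFinset {u v w : V} :
    w ∈ pairNeighborFinset E u v ↔ ({u, v, w} : Finset V) ∈ E := by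
  simp [pairNeighborFinset]

theorem mem_tet_of_faces (h3 : ∀ e ∈ E, e.card = 3) {p q r s : V}
    (hpqr : ({p, q, r} : Finset V) ∈ E) (hpqs : ({p, q, s} : Finset V) ∈ E)
    (hprs : ({p, r, s} : Finset V) ∈ E) (hqrs : ({q, r, s} : Finset V) ∈ E) :
    ({p, q, r, s} : Finset V) ∈ tet E := by
  obtain ⟨hpq, hpr, -⟩ := pairwise_ne_of_card_eq_three (h3 _ hpqr)
  obtain ⟨-, hps, -⟩ := pairwise_ne_of_card_eq_three (h3 _ hpqs)
  refine mem_filter.2 ⟨mem_powersetCard.2 ⟨subset_univ _, ?_⟩, fun t ht => ?_⟩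
  · rw [card_insert_of_notMem (by simp [hpq, hpr, hps]), h3 _ hqrs]
  · obtain ⟨hsub, hcard⟩ := mem_powersetCard.1 ht
    rcases eq_triple_of_subset_of_card_eq_three hsub hcard with rfl | rfl | rfl | rfl <;>
      assumption

theorem edgeConn_of_common_apex (h3 : ∀ e ∈ E, e.card = 3) {p q r v x : V}
    (hpvq : ({p, v, q} : Finset V) ∈ E) (hqvr : ({q, v, r} : Finset V) ∈ E)
    (hpv : x ∈ pairNeighborFinset E p v) (hpq : x ∈ pairNeighborFinset E p q)
    (hqv : x ∈ pairNeighborFinset E q v) (hqr : x ∈ pairNeighborFinset E q r)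
    (hrv : x ∈ pairNeighborFinset E r v) :
    EdgeConn E {p, v, q} {q, v, r} := by
  rw [mem_pairNeighborFinset] at hpv hpq hqv hqr hrv
  have hvqx : ({v, q, x} : Finset V) ∈ E := by rwa [insert_comm]
  have hvqr : ({v, q, r} : Finset V) ∈ E := by rwa [insert_comm]
  have hvxr : ({v, x, r} : Finset V) ∈ E := by rwa [pair_comm, insert_comm]
  have hqxr : ({q, x, r} : Finset V) ∈ E := by rwa [pair_comm]
  have hK := mem_tet_of_faces h3 hpvq hpv hpq hvqx
  have hK' := mem_tet_of_faces h3 hvqx hvqr hvxr hqxr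
  exact ⟨_, _, hK, hK', by grind, by grind, tightConn_step _ hK hK'⟩

end Tetrahedra

/-- If `δ₂(H) > 7n/9`, then for every vertex `v` there is no properly coloured
copy of `C₄` in the link graph `L(v)`, with edges of `L(v)` coloured by the
tight component of `𝒯(H)` containing the extensions of the corresponding edge. -/
theorem no_properly_coloured_C4 {V : Type*} [Fintype V] [DecidableEq V]
    (E : Finset (Finset V)) (h3 : ∀ e ∈ E, e.card = 3)
    (hδ : ∀ u v : V, u ≠ v →
      (7 : ℝ) * Fintype.card V / 9 <
        ((Finset.univ.filter fun w => ({u, v, w} : Finset V) ∈ E).card : ℝ)) :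
    ¬ ∃ v a b c d : V, ({a, b, c, d} : Finset V).card = 4 ∧ v ∉ ({a, b, c, d} : Finset V) ∧
      ({a, v, b} : Finset V) ∈ E ∧ ({b, v, c} : Finset V) ∈ E ∧
      ({c, v, d} : Finset V) ∈ E ∧ ({d, v, a} : Finset V) ∈ E ∧
      ¬ EdgeConn E {a, v, b} {b, v, c} ∧ ¬ EdgeConn E {b, v, c} {c, v, d} ∧
      ¬ EdgeConn E {c, v, d} {d, v, a} ∧ ¬ EdgeConn E {d, v, a} {a, v, b} := by
  rintro ⟨v, a, b, c, d, -, -, eab, ebc, ecd, eda, nab_bc, nbc_cd, ncd_da, -⟩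
  obtain ⟨hav, hab, -⟩ := pairwise_ne_of_card_eq_three (h3 _ eab)
  obtain ⟨hbv, hbc, -⟩ := pairwise_ne_of_card_eq_three (h3 _ ebc)
  obtain ⟨hcv, hcd, -⟩ := pairwise_ne_of_card_eq_three (h3 _ ecd)
  obtain ⟨hdv, hda, -⟩ := pairwise_ne_of_card_eq_three (h3 _ eda)
  set N := pairNeighborFinset E
  have hN : ∀ u w, u ≠ w → ((N u w)ᶜ.card : ℝ) < Fintype.card V - 7 * Fintype.card V / 9 :=
    fun u w huw => card_compl_lt_sub (hδ u w huw)
  set S := N b v ∩ N c v ∩ N a b ∩ N b c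
  set T := N c v ∩ N d v ∩ N c d ∩ N d a
  have hS : S ⊆ (N a v)ᶜ := fun x hx => mem_compl.2 fun havx => by
    obtain ⟨⟨⟨hbvx, hcvx⟩, habx⟩, hbcx⟩ := by simpa only [S, mem_inter] using hx
    exact nab_bc (edgeConn_of_common_apex h3 eab ebc havx habx hbvx hbcx hcvx)
  have hT : T ⊆ (N a v)ᶜ := fun x hx => mem_compl.2 fun havx => by
    obtain ⟨⟨⟨hcvx, hdvx⟩, hcdx⟩, hdax⟩ := by simpa only [T, mem_inter] using hx
    exact ncd_da (edgeConn_of_common_apex h3 ecd eda hcvx hcdx hdvx hdax havx)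
  have hST : Disjoint S T := disjoint_left.2 fun x hxS hxT => by
    obtain ⟨⟨⟨hbvx, hcvx⟩, -⟩, hbcx⟩ := by simpa only [S, mem_inter] using hxS
    obtain ⟨⟨⟨-, hdvx⟩, hcdx⟩, -⟩ := by simpa only [T, mem_inter] using hxT
    exact nbc_cd (edgeConn_of_common_apex h3 ebc ecd hbvx hbcx hcvx hcdx hdvx)
  refine not_disjoint_of_subset_of_card_lt hS hT ?_ hST
  have hSc := card_compl_inter_lt_add (card_compl_inter_lt_add
    (card_compl_inter_lt_add (hN b v hbv) (hN c v hcv)) (hN a b hab)) (hN b c hbc)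
  have hTc := card_compl_inter_lt_add (card_compl_inter_lt_add
    (card_compl_inter_lt_add (hN c v hcv) (hN d v hdv)) (hN c d hcd)) (hN d a hda)
  linarith [hN a v hav]
end

section
/- Let H be a 3-graph on n vertices with δ₂(H) > 7n/9. Then for every pair of distinct vertices u, v of H, the edges of H containing both u and v lie in at most two tight components of the tetrahedral graph 𝒯(H); i.e. |φ({u,v})| ≤ 2. -/
open Finset

/-
A tetrahedron on the edge `wuv` can be closed by any vertex `x` with `uvx, wux, wvx ∈ H`.
Each of these three codegree conditions fails for fewer than `2n/9` vertices, so every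
edge `wᵢuv` through the pair has more than `n/3` such apexes `x`. For three edges through
`uv`, two of these apex sets must meet, and a common apex `x` of `w₁uv` and `w₂uv` gives the
tight walk `w₁ u v x w₂` between the tetrahedra `w₁uvx` and `uvxw₂`.
-/

section

variable {V : Type*} [DecidableEq V]

lemma Finset.ne_of_card_eq_three {a b c : V} (h : #({a, b, c} : Finset V) = 3) :
    a ≠ b ∧ a ≠ c ∧ b ≠ c := by
  refine ⟨?_, ?_, ?_⟩ <;> rintro rfl <;> grind [card_le_two]

lemma Finset.exists_eq_erase_of_subset_of_card_add_one {s t : Finset V} (h : t ⊆ s)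
    (hc : #t + 1 = #s) : ∃ y ∈ s, t = s.erase y := by
  obtain ⟨y, hy⟩ := card_eq_one.mp (show #(s \ t) = 1 by rw [card_sdiff_of_subset h]; omega)
  refine ⟨y, (mem_sdiff.mp (hy ▸ mem_singleton_self y)).1, ?_⟩
  rw [← sdiff_singleton_eq_erase, ← hy, Finset.sdiff_sdiff_eq_self h]

lemma tightConn_of_mem_of_mem {T : Finset (Finset V)} {a b c d e : V}
    (h₁ : {a, b, c, d} ∈ T) (h₂ : {b, c, d, e} ∈ T) :
    TightConn T {a, b, c, d} {b, c, d, e} := by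
  refine ⟨[a, b, c, d, e], by simp, by simp, by simp, fun i hi => ?_⟩
  obtain rfl | rfl : i = 0 ∨ i = 1 := by simp only [List.length_cons, List.length_nil] at hi; omega
  · simpa using h₁
  · simpa using h₂

variable [Fintype V]

lemma Finset.card_add_card_le_card_add_card_inter (A B : Finset V) :
    #A + #B ≤ Fintype.card V + #(A ∩ B) := by
  have := card_le_univ (A ∪ B)
  have := card_union_add_card_inter A B
  omega

lemma Finset.inter_nonempty_of_card_lt_add_add {A B C : Finset V}
    (h : Fintype.card V < #A + #B + #C) :
    (A ∩ B).Nonempty ∨ (A ∩ C).Nonempty ∨ (B ∩ C).Nonempty := by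
  by_contra! hABC
  simp only [← disjoint_iff_inter_eq_empty] at hABC
  obtain ⟨hAB, hAC, hBC⟩ := hABC
  have := card_le_univ (A ∪ B ∪ C)
  rw [card_union_of_disjoint (disjoint_union_left.2 ⟨hAC, hBC⟩), card_union_of_disjoint hAB]
    at this
  omega

lemma mem_tet_iff {E : Finset (Finset V)} {K : Finset V} :
    K ∈ tet E ↔ #K = 4 ∧ ∀ y ∈ K, K.erase y ∈ E := by
  simp only [tet, mem_filter, mem_powersetCard, subset_univ, true_and]
  refine and_congr_right fun hK => ⟨fun h y hy => h _ ⟨erase_subset y K, ?_⟩, ?_⟩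
  · rw [card_erase_of_mem hy, hK]
  · rintro h t ⟨hsub, ht⟩
    obtain ⟨y, hy, rfl⟩ := exists_eq_erase_of_subset_of_card_add_one hsub (by omega)
    exact h y hy

lemma mem_tet_of_faces_mem {E : Finset (Finset V)} (hE : ∀ e ∈ E, #e = 3)
    {a b c d : V} (h₁ : {b, c, d} ∈ E) (h₂ : {a, c, d} ∈ E) (h₃ : {a, b, d} ∈ E)
    (h₄ : {a, b, c} ∈ E) : {a, b, c, d} ∈ tet E := by
  obtain ⟨hab, hac, hbc⟩ := ne_of_card_eq_three (hE _ h₄)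
  obtain ⟨-, had, hbd⟩ := ne_of_card_eq_three (hE _ h₃)
  obtain ⟨-, -, hcd⟩ := ne_of_card_eq_three (hE _ h₂)
  rw [mem_tet_iff]
  constructor
  · simp [*]
  · simp [erase_insert_of_ne, *]

def link (E : Finset (Finset V)) (u v : V) : Finset V :=
  univ.filter fun w => {u, v, w} ∈ E

def apexes (E : Finset (Finset V)) (u v w : V) : Finset V :=
  link E u v ∩ link E w u ∩ link E w v

lemma mem_apexes {E : Finset (Finset V)} {u v w x : V} :
    x ∈ apexes E u v w ↔ {u, v, x} ∈ E ∧ {w, u, x} ∈ E ∧ {w, v, x} ∈ E := by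
  simp [apexes, link]

lemma card_apexes_gt {E : Finset (Finset V)}
    (hδ : ∀ u v : V, u ≠ v → (7 : ℝ) * Fintype.card V / 9 < #(link E u v))
    {u v w : V} (huv : u ≠ v) (hwu : w ≠ u) (hwv : w ≠ v) :
    (Fintype.card V : ℝ) / 3 < #(apexes E u v w) := by
  have hcount : #(link E u v) + #(link E w u) + #(link E w v)
      ≤ 2 * Fintype.card V + #(apexes E u v w) := by
    have := card_add_card_le_card_add_card_inter (link E u v) (link E w u)
    have := card_add_card_le_card_add_card_inter (link E u v ∩ link E w u) (link E w v)
    rw [apexes]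
    omega
  have hcount' : (#(link E u v) + #(link E w u) + #(link E w v) : ℝ)
      ≤ 2 * Fintype.card V + #(apexes E u v w) := by exact_mod_cast hcount
  linarith [hδ u v huv, hδ w u hwu, hδ w v hwv]

lemma insert_mem_tet_of_mem_apexes {E : Finset (Finset V)} (hE : ∀ e ∈ E, #e = 3)
    {u v w x : V} (he : {w, u, v} ∈ E) (hx : x ∈ apexes E u v w) : {w, u, v, x} ∈ tet E := by
  obtain ⟨huvx, hwux, hwvx⟩ := mem_apexes.1 hx
  exact mem_tet_of_faces_mem hE huvx hwvx hwux he

lemma edgeConn_of_mem_apexes {E : Finset (Finset V)} (hE : ∀ e ∈ E, #e = 3)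
    {u v w₁ w₂ x : V} (he₁ : {w₁, u, v} ∈ E) (he₂ : {w₂, u, v} ∈ E)
    (hx₁ : x ∈ apexes E u v w₁) (hx₂ : x ∈ apexes E u v w₂) :
    EdgeConn E {w₁, u, v} {w₂, u, v} := by
  have hK₁ := insert_mem_tet_of_mem_apexes hE he₁ hx₁
  have hK₂ : {u, v, x, w₂} ∈ tet E := by
    convert insert_mem_tet_of_mem_apexes hE he₂ hx₂ using 1
    ext; simp; tauto
  refine ⟨_, _, hK₁, hK₂, ?_, ?_, tightConn_of_mem_of_mem hK₁ hK₂⟩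
  · simp [insert_subset_iff]
  · simp [insert_subset_iff]

end

/-- If `δ₂(H) > 7n/9`, then for every pair of distinct vertices `u, v`, the
edges of `H` containing both `u` and `v` lie in at most two tight components of
`𝒯(H)`: among any three such edges, two lie in the same tight component. -/
theorem pair_in_two_components {V : Type*} [Fintype V] [DecidableEq V]
    (E : Finset (Finset V)) (h3 : ∀ e ∈ E, e.card = 3)
    (hδ : ∀ u v : V, u ≠ v →
      (7 : ℝ) * Fintype.card V / 9 <
        ((Finset.univ.filter fun w => ({u, v, w} : Finset V) ∈ E).card : ℝ)) :
    ∀ u v : V, u ≠ v → ∀ e₁ e₂ e₃ : Finset V, e₁ ∈ E → e₂ ∈ E → e₃ ∈ E →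
      ({u, v} : Finset V) ⊆ e₁ → ({u, v} : Finset V) ⊆ e₂ → ({u, v} : Finset V) ⊆ e₃ →
      EdgeConn E e₁ e₂ ∨ EdgeConn E e₁ e₃ ∨ EdgeConn E e₂ e₃ := by
  intro u v huv e₁ e₂ e₃ he₁ he₂ he₃ hs₁ hs₂ hs₃
  have third_vertex : ∀ e ∈ E, {u, v} ⊆ e → ∃ w ∉ ({u, v} : Finset V), insert w {u, v} = e :=
    fun e he hs => exists_eq_insert_iff.2 ⟨hs, by rw [card_pair huv, h3 e he]⟩
  obtain ⟨w₁, hw₁, rfl⟩ := third_vertex e₁ he₁ hs₁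
  obtain ⟨w₂, hw₂, rfl⟩ := third_vertex e₂ he₂ hs₂
  obtain ⟨w₃, hw₃, rfl⟩ := third_vertex e₃ he₃ hs₃
  have many_apexes : ∀ w ∉ ({u, v} : Finset V), (Fintype.card V : ℝ) / 3 < #(apexes E u v w) := by
    intro w hw
    simp only [mem_insert, mem_singleton, not_or] at hw
    exact card_apexes_gt hδ huv hw.1 hw.2
  have hsum : Fintype.card V < #(apexes E u v w₁) + #(apexes E u v w₂) + #(apexes E u v w₃) := by
    have : (Fintype.card V : ℝ)
        < #(apexes E u v w₁) + #(apexes E u v w₂) + #(apexes E u v w₃) := by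
      linarith [many_apexes w₁ hw₁, many_apexes w₂ hw₂, many_apexes w₃ hw₃]
    exact_mod_cast this
  rcases inter_nonempty_of_card_lt_add_add hsum with ⟨x, hx⟩ | ⟨x, hx⟩ | ⟨x, hx⟩ <;>
    obtain ⟨hx, hx'⟩ := mem_inter.1 hx
  · exact .inl (edgeConn_of_mem_apexes h3 he₁ he₂ hx hx')
  · exact .inr (.inl (edgeConn_of_mem_apexes h3 he₁ he₃ hx hx'))
  · exact .inr (.inr (edgeConn_of_mem_apexes h3 he₂ he₃ hx hx'))
end

section
/- Let H be a 3-graph on n vertices with δ₂(H) > 7n/9 such that the tetrahedral graph 𝒯(H) has at least two tight components. Then there exists a pair {x,y} of distinct vertices of H and two distinct tight components T₁, T₂ such that some edge containing {x,y} lies in T₁ and some edge containing {x,y} lies in T₂. -/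
/-!
Suppose, to the contrary, that for every pair `{x, y}` all edges through `{x, y}` lie in one
tight component. Since every pair has more than `n / 2` common neighbours, any two pairs
`ab`, `a'b'` have a common neighbour `w`, and `aw`, `a'w` have a common neighbour `z`. The
chain of edges `ab*, abw, awz, a'wz, a'b'w, a'b'*`, in which consecutive edges share a pair,
then puts any two edges, and hence any two tetrahedra, into one tight component.

Tight connectivity of two tetrahedra is the same as being joined by a sequence of tetrahedra
in which consecutive ones share a triple: a tight walk can be prefixed by its first three
vertices in rotated order, so any vertex of the first window can be moved to the fourth
position and then replaced.
-/

open Finset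

section TightWalk

variable {V : Type*} [DecidableEq V] {T : Finset (Finset V)}

lemma List.drop_length_sub_append {α : Type*} {l₁ l₂ : List α} {k : ℕ}
    (h : k ≤ l₂.length) :
    (l₁ ++ l₂).drop ((l₁ ++ l₂).length - k) = l₂.drop (l₂.length - k) := by
  rw [List.drop_append, List.drop_eq_nil_of_le (by simp; omega), List.nil_append,
    List.length_append]
  congr 1
  omega

lemma Finset.eq_insert_of_three_le_card_inter {a : Finset V} {w x y u z : V} (ha : #a = 4)
    (hw : w ∈ a) (hwc : w ∉ ({x, y, u, z} : Finset V)) (hz : z ∉ a)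
    (h : 3 ≤ #(a ∩ {x, y, u, z})) : a = {w, x, y, u} := by
  have hsub : a ∩ {x, y, u, z} ⊆ {x, y, u} := by
    intro v hv
    simp only [mem_inter, mem_insert, mem_singleton] at hv ⊢
    rcases hv with ⟨hva, rfl | rfl | rfl | rfl⟩ <;> simp_all
  have heq : a ∩ {x, y, u, z} = {x, y, u} := eq_of_subset_of_card_le hsub (card_le_three.trans h)
  refine (eq_of_subset_of_card_le (insert_subset hw (heq ▸ inter_subset_left)) ?_).symm
  rw [ha, ← heq, card_insert_of_notMem fun hw' => hwc (mem_inter.mp hw').2]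
  omega

lemma Finset.ne_of_card_eq_three_s12 {x y z : V} (h : #({x, y, z} : Finset V) = 3) :
    x ≠ y ∧ x ≠ z ∧ y ≠ z := by
  refine ⟨?_, ?_, ?_⟩ <;> rintro rfl <;> simp at h <;>
    exact (card_le_two.trans_lt (by norm_num)).ne h

def IsTightWalk (T : Finset (Finset V)) (l : List V) : Prop :=
  ∀ i, i + 4 ≤ l.length → ((l.drop i).take 4).toFinset ∈ T

def TightAdj (T : Finset (Finset V)) (A B : Finset V) : Prop :=
  A ∈ T ∧ B ∈ T ∧ 3 ≤ #(A ∩ B)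

lemma IsTightWalk.head_mem {l : List V} (h : IsTightWalk T l) (hlen : 4 ≤ l.length) :
    (l.take 4).toFinset ∈ T := by
  simpa using h 0 (by simpa using hlen)

lemma IsTightWalk.tail {x : V} {l : List V} (h : IsTightWalk T (x :: l)) : IsTightWalk T l :=
  fun i hi => by simpa using h (i + 1) (by simp; omega)

lemma IsTightWalk.cons {x : V} {l : List V} (h : IsTightWalk T l)
    (hx : ((x :: l).take 4).toFinset ∈ T) : IsTightWalk T (x :: l)
  | 0, _ => hx
  | i + 1, hi => by simpa using h i (by simp at hi; omega)

lemma IsTightWalk.rotate {p q r s : V} {rest : List V}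
    (h : IsTightWalk T (p :: q :: r :: s :: rest)) :
    IsTightWalk T (s :: p :: q :: r :: s :: rest) :=
  h.cons <| by
    convert h.head_mem (by simp) using 1
    ext
    simp only [List.take_succ_cons, List.take_zero, List.mem_toFinset, List.mem_cons,
      List.not_mem_nil, or_false]
    tauto

lemma IsTightWalk.exists_rotation {l : List V} (h : IsTightWalk T l) (hlen : 4 ≤ l.length)
    {z : V} (hz : z ∈ l.take 4) :
    ∃ ys x y u tl, ys ++ l = x :: y :: u :: z :: tl ∧ IsTightWalk T (ys ++ l) ∧
      ({x, y, u, z} : Finset V) = (l.take 4).toFinset := by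
  obtain ⟨p, q, r, s, rest, rfl⟩ : ∃ p q r s rest, l = p :: q :: r :: s :: rest := by
    rcases l with _ | ⟨p, _ | ⟨q, _ | ⟨r, _ | ⟨s, rest⟩⟩⟩⟩ <;> simp at hlen
    exact ⟨p, q, r, s, rest, rfl⟩
  simp only [List.take_succ_cons, List.take_zero, List.mem_cons, List.not_mem_nil,
    or_false] at hz
  rcases hz with rfl | rfl | rfl | rfl
  · exact ⟨[q, r, s], _, _, _, _, rfl, h.rotate.rotate.rotate, by ext; simp; tauto⟩
  · exact ⟨[r, s], _, _, _, _, rfl, h.rotate.rotate, by ext; simp; tauto⟩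
  · exact ⟨[s], _, _, _, _, rfl, h.rotate, by ext; simp; tauto⟩
  · exact ⟨[], _, _, _, _, rfl, h, by simp⟩

lemma TightConn.of_tightAdj (hT : ∀ A ∈ T, #A = 4) {a c L : Finset V} (hac : TightAdj T a c)
    (h : TightConn T c L) : TightConn T a L := by
  obtain ⟨ha, hc, hcard⟩ := hac
  have hac_card : #a = #c := by rw [hT a ha, hT c hc]
  by_cases hsub : a ⊆ c
  · rwa [eq_of_subset_of_card_le hsub hac_card.ge]
  obtain ⟨w, hwa, hwc⟩ := not_subset.mp hsub
  obtain ⟨z, hzc, hza⟩ : ∃ z ∈ c, z ∉ a := not_subset.mp fun hca =>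
    hsub (eq_of_subset_of_card_le hca hac_card.le).ge
  obtain ⟨l, hlen, rfl, hlast, hl⟩ := h
  obtain ⟨ys, x, y, u, tl, hys, hwalk, hxyuz⟩ :=
    IsTightWalk.exists_rotation hl hlen (List.mem_toFinset.mp hzc)
  rw [← hxyuz] at hwc hcard
  have ha_eq : a = {w, x, y, u} :=
    Finset.eq_insert_of_three_le_card_inter (hT a ha) hwa hwc hza hcard
  refine ⟨w :: (ys ++ l), by simp; omega, ?_, ?_, ?_⟩
  · rw [hys, ha_eq]
    simp
  · rw [← List.cons_append, List.drop_length_sub_append hlen]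
    exact hlast
  · rw [hys] at hwalk ⊢
    exact hwalk.cons (by rw [ha_eq] at ha; simpa using ha)

lemma TightConn.refl (hT : ∀ A ∈ T, #A = 4) {K : Finset V} (hK : K ∈ T) :
    TightConn T K K := by
  have hlen : K.toList.length = 4 := by rw [length_toList, hT K hK]
  have htake : K.toList.take 4 = K.toList := List.take_of_length_le hlen.le
  refine ⟨K.toList, hlen.ge, by rw [htake, toList_toFinset], by simp [hlen], fun i hi => ?_⟩
  obtain rfl : i = 0 := by omega
  simpa [htake] using hK

lemma IsTightWalk.reflTransGen (hT : ∀ A ∈ T, #A = 4) :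
    ∀ {l : List V}, IsTightWalk T l → 4 ≤ l.length →
      Relation.ReflTransGen (TightAdj T) (l.take 4).toFinset (l.drop (l.length - 4)).toFinset
  | [], _, hlen => by simp at hlen
  | x :: l, h, hlen => by
    rcases (show l.length = 3 ∨ 4 ≤ l.length by simp at hlen; omega) with hl3 | hl4
    · rw [List.take_of_length_le (by simp; omega), show (x :: l).length - 4 = 0 by simp; omega,
        List.drop_zero]
    · rw [← List.singleton_append, List.drop_length_sub_append hl4]
      refine .head ⟨h.head_mem hlen, h.tail.head_mem hl4, ?_⟩ (h.tail.reflTransGen hT hl4)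
      have hcard : #(insert x (l.take 3).toFinset) = 4 := by
        simpa using hT _ (h.head_mem hlen)
      have hsub : (l.take 3).toFinset ⊆ (l.take 4).toFinset := fun v hv => by
        simpa using List.take_subset_take_left l (by norm_num) (List.mem_toFinset.mp hv)
      calc 3 ≤ #(l.take 3).toFinset := by have := card_insert_le x (l.take 3).toFinset; omega
        _ ≤ _ := card_le_card (subset_inter (by simp [subset_insert]) hsub)

theorem tightConn_iff_reflTransGen (hT : ∀ A ∈ T, #A = 4) {K L : Finset V} (hK : K ∈ T) :
    TightConn T K L ↔ Relation.ReflTransGen (TightAdj T) K L := by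
  refine ⟨fun ⟨l, hlen, hhead, hlast, hl⟩ => hhead ▸ hlast ▸ IsTightWalk.reflTransGen hT hl hlen,
    fun h => ?_⟩
  induction h using Relation.ReflTransGen.head_induction_on with
  | refl => exact TightConn.refl hT hK
  | head hadj _ ih => exact TightConn.of_tightAdj hT hadj (ih hadj.2.1)

end TightWalk

section Hypergraph

variable {V : Type*} [Fintype V] [DecidableEq V] {E : Finset (Finset V)}

def pairNbhd (E : Finset (Finset V)) (u v : V) : Finset V :=
  univ.filter fun w => ({u, v, w} : Finset V) ∈ E

lemma exists_mem_pairNbhd_inter {u v u' v' : V} (huv : Fintype.card V < 2 * #(pairNbhd E u v))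
    (huv' : Fintype.card V < 2 * #(pairNbhd E u' v')) :
    ∃ w, ({u, v, w} : Finset V) ∈ E ∧ ({u', v', w} : Finset V) ∈ E := by
  obtain ⟨w, hw⟩ := inter_nonempty_of_card_lt_card_add_card (subset_univ (pairNbhd E u v))
    (subset_univ (pairNbhd E u' v')) (by rw [card_univ]; omega)
  simp only [pairNbhd, mem_inter, mem_filter, mem_univ, true_and] at hw
  exact ⟨w, hw⟩

lemma card_of_mem_tet {A : Finset V} (hA : A ∈ tet E) : #A = 4 :=
  (mem_powersetCard.mp (mem_filter.mp hA).1).2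

lemma mem_of_mem_tet {A t : Finset V} (hA : A ∈ tet E) (ht : t ⊆ A) (htc : #t = 3) : t ∈ E :=
  (mem_filter.mp hA).2 t (mem_powersetCard.mpr ⟨ht, htc⟩)

lemma tightAdj_tet_of_subset {A B e : Finset V} (hA : A ∈ tet E) (hB : B ∈ tet E)
    (heA : e ⊆ A) (heB : e ⊆ B) (he : #e = 3) : TightAdj (tet E) A B :=
  ⟨hA, hB, he ▸ card_le_card (subset_inter heA heB)⟩

lemma tightConn_tet_iff {K L : Finset V} (hK : K ∈ tet E) :
    TightConn (tet E) K L ↔ Relation.ReflTransGen (TightAdj (tet E)) K L :=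
  tightConn_iff_reflTransGen (fun _ => card_of_mem_tet) hK

lemma EdgeConn.trans {e f g : Finset V} (hf : #f = 3) (hef : EdgeConn E e f)
    (hfg : EdgeConn E f g) : EdgeConn E e g := by
  obtain ⟨A, B, hA, hB, heA, hfB, hAB⟩ := hef
  obtain ⟨B', C, hB', hC, hfB', hgC, hB'C⟩ := hfg
  refine ⟨A, C, hA, hC, heA, hgC, (tightConn_tet_iff hA).mpr ?_⟩
  exact ((tightConn_tet_iff hA).mp hAB).tail (tightAdj_tet_of_subset hB hB' hfB hfB' hf)
    |>.trans ((tightConn_tet_iff hB').mp hB'C)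

lemma tightConn_tet_of_edgeConn {K K' e e' : Finset V} (hK : K ∈ tet E) (hK' : K' ∈ tet E)
    (heK : e ⊆ K) (he'K' : e' ⊆ K') (he : #e = 3) (he' : #e' = 3) (h : EdgeConn E e e') :
    TightConn (tet E) K K' := by
  obtain ⟨A, A', hA, hA', heA, he'A', hAA'⟩ := h
  refine (tightConn_tet_iff hK).mpr (.head (tightAdj_tet_of_subset hK hA heK heA he) ?_)
  exact ((tightConn_tet_iff hA).mp hAA').tail (tightAdj_tet_of_subset hA' hK' he'A' he'K' he')

lemma edgeConn_of_forall_pair (h3 : ∀ e ∈ E, #e = 3)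
    (hδ : ∀ u v : V, u ≠ v → Fintype.card V < 2 * #(pairNbhd E u v))
    (hpair : ∀ x y : V, x ≠ y → ∀ e f : Finset V, e ∈ E → f ∈ E →
      ({x, y} : Finset V) ⊆ e → ({x, y} : Finset V) ⊆ f → EdgeConn E e f)
    {e f : Finset V} (he : e ∈ E) (hf : f ∈ E) : EdgeConn E e f := by
  obtain ⟨a, ha, b, hb, hab⟩ := one_lt_card.mp (by rw [h3 e he]; norm_num)
  obtain ⟨a', ha', b', hb', hab'⟩ := one_lt_card.mp (by rw [h3 f hf]; norm_num)
  obtain ⟨w, habw, ha'b'w⟩ := exists_mem_pairNbhd_inter (hδ a b hab) (hδ a' b' hab')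
  have haw := (Finset.ne_of_card_eq_three_s12 (h3 _ habw)).2.1
  have ha'w := (Finset.ne_of_card_eq_three_s12 (h3 _ ha'b'w)).2.1
  obtain ⟨z, hawz, ha'wz⟩ := exists_mem_pairNbhd_inter (hδ a w haw) (hδ a' w ha'w)
  have hwz := (Finset.ne_of_card_eq_three_s12 (h3 _ hawz)).2.2
  have e_abw := hpair a b hab _ _ he habw (by simp [insert_subset_iff, ha, hb]) (by simp)
  have abw_awz := hpair a w haw _ _ habw hawz (by simp [insert_subset_iff]) (by simp)
  have awz_a'wz := hpair w z hwz _ _ hawz ha'wz (by simp) (by simp)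
  have a'wz_a'b'w := hpair a' w ha'w _ _ ha'wz ha'b'w (by simp) (by simp [insert_subset_iff])
  have a'b'w_f := hpair a' b' hab' _ _ ha'b'w hf (by simp) (by simp [insert_subset_iff, ha', hb'])
  exact (((e_abw.trans (h3 _ habw) abw_awz).trans (h3 _ hawz) awz_a'wz).trans (h3 _ ha'wz)
    a'wz_a'b'w).trans (h3 _ ha'b'w) a'b'w_f

end Hypergraph

/-- If `δ₂(H) > 7n/9` and `𝒯(H)` has at least two tight components, then there
is a pair `{x, y}` of distinct vertices and two edges containing `{x, y}` lying
in distinct tight components of `𝒯(H)`. -/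
theorem pair_in_two_distinct_components {V : Type*} [Fintype V] [DecidableEq V]
    (E : Finset (Finset V)) (h3 : ∀ e ∈ E, e.card = 3)
    (hδ : ∀ u v : V, u ≠ v →
      (7 : ℝ) * Fintype.card V / 9 <
        ((Finset.univ.filter fun w => ({u, v, w} : Finset V) ∈ E).card : ℝ))
    (hcomp : ∃ K₁ K₂ : Finset V, K₁ ∈ tet E ∧ K₂ ∈ tet E ∧
      ¬ TightConn (tet E) K₁ K₂) :
    ∃ x y : V, x ≠ y ∧ ∃ e f : Finset V, e ∈ E ∧ f ∈ E ∧
      ({x, y} : Finset V) ⊆ e ∧ ({x, y} : Finset V) ⊆ f ∧ ¬ EdgeConn E e f := by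
  obtain ⟨K₁, K₂, hK₁, hK₂, hK₁K₂⟩ := hcomp
  by_contra! hpair
  have hδ' : ∀ u v : V, u ≠ v → Fintype.card V < 2 * #(pairNbhd E u v) := fun u v huv => by
    have h := hδ u v huv
    have hn : (0 : ℝ) ≤ Fintype.card V := Nat.cast_nonneg _
    exact_mod_cast (show (Fintype.card V : ℝ) < 2 * #(pairNbhd E u v) by
      unfold pairNbhd; linarith)
  obtain ⟨e₁, he₁K₁, he₁⟩ := exists_subset_card_eq (n := 3) <| by
    rw [card_of_mem_tet hK₁]; norm_num
  obtain ⟨e₂, he₂K₂, he₂⟩ := exists_subset_card_eq (n := 3) <| by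
    rw [card_of_mem_tet hK₂]; norm_num
  exact hK₁K₂ <| tightConn_tet_of_edgeConn hK₁ hK₂ he₁K₁ he₂K₂ he₁ he₂ <|
    edgeConn_of_forall_pair h3 hδ' hpair (mem_of_mem_tet hK₁ he₁K₁ he₁)
      (mem_of_mem_tet hK₂ he₂K₂ he₂)
end

section
/- Let n ≥ 6 and 0 < μ, θ < 1. Let H be a 3-graph on n vertices that is (μ, θ)-dense. Then there exists a spanning subgraph H' of H (same vertex set, E(H') ⊆ E(H)) that is strongly (μ − 8θ^{1/4}, θ + θ^{1/4})-dense, and moreover |E(H) \ E(H')| ≤ 8θ^{1/2}·(n choose 3). -/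
/-!
Let `B` be the pairs of codegree below `μ(n-2)`; they lie in the exceptional set `S`, so
`|B| ≤ θ·C(n,2)`. Call a vertex heavy if it lies in more than `√θ·n` pairs of `B`; double counting
gives at most `√θ·n` heavy vertices. Delete every edge containing a pair of `B` or a heavy vertex:
this removes at most `|B|(n-2) + √θ·n·C(n-1,2) ≤ 6√θ·C(n,3)` edges. A pair `{a,c}` outside `B`
avoiding heavy vertices only loses edges `{a,c,x}` with `x` heavy or `{a,x}` or `{c,x}` in `B`,
at most `3√θ·n ≤ 8θ^{1/4}(n-2)` of them. Every pair still covered by an edge is of this kind, so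
`S` together with the pairs through a heavy vertex is a new exceptional set; it has at most
`θ·C(n,2) + √θ·n(n-1) ≤ (θ + θ^{1/4})·C(n,2)` elements as long as `θ^{1/4} ≤ 1/2`. For larger `θ`
the empty subgraph works.
-/

open Finset

/-- A 3-graph on `n` vertices (with edge set `E`) is `(μ, θ)`-dense: there is a
set `S` of at most `θ·(n choose 2)` pairs of vertices such that every pair not
in `S` has degree at least `μ(n - 2)`. -/
def IsDense {V : Type*} [Fintype V] [DecidableEq V] (E : Finset (Finset V))
    (n : ℕ) (μ θ : ℝ) : Prop :=
  ∃ S : Finset (Finset V), (∀ P ∈ S, P.card = 2) ∧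
    (S.card : ℝ) ≤ θ * n.choose 2 ∧
    ∀ P : Finset V, P.card = 2 → P ∉ S →
      μ * ((n : ℝ) - 2) ≤ ((E.filter fun e => P ⊆ e).card : ℝ)

/-- A 3-graph is strongly `(μ, θ)`-dense: it is `(μ, θ)`-dense and every pair of
vertices contained in at least one edge has degree at least `μ(n - 2)`. -/
def IsStronglyDense {V : Type*} [Fintype V] [DecidableEq V]
    (E : Finset (Finset V)) (n : ℕ) (μ θ : ℝ) : Prop :=
  IsDense E n μ θ ∧
    ∀ P : Finset V, P.card = 2 → 0 < (E.filter fun e => P ⊆ e).card →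
      μ * ((n : ℝ) - 2) ≤ ((E.filter fun e => P ⊆ e).card : ℝ)

namespace Hypergraph

variable {V : Type*} [Fintype V] [DecidableEq V]

def codeg (E : Finset (Finset V)) (P : Finset V) : ℕ := #{e ∈ E | P ⊆ e}

section Codegree

variable {E : Finset (Finset V)} {P : Finset V} {k : ℕ}

lemma codeg_le_card_filter_insert (hE : ∀ e ∈ E, #e = k + 1) (hP : #P = k) :
    codeg E P ≤ #{x ∈ Pᶜ | insert x P ∈ E} := by
  refine (card_le_card fun e he => ?_).trans (card_image_le (f := (insert · P)))
  obtain ⟨heE, hPe⟩ := mem_filter.mp he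
  obtain ⟨x, hx⟩ := card_eq_one.mp <| show #(e \ P) = 1 by
    rw [card_sdiff_of_subset hPe, hE e heE, hP]; simp
  have hxe : insert x P = e := by
    rw [insert_eq, ← hx, sdiff_union_of_subset hPe]
  have hxP : x ∉ P := (mem_sdiff.mp (hx ▸ mem_singleton_self x)).2
  exact mem_image.mpr ⟨x, mem_filter.mpr ⟨mem_compl.mpr hxP, hxe ▸ heE⟩, hxe⟩

lemma codeg_le_card_sub (hE : ∀ e ∈ E, #e = k + 1) (hP : #P = k) :
    codeg E P ≤ Fintype.card V - k :=
  (codeg_le_card_filter_insert hE hP).trans <| (card_filter_le _ _).trans_eq <| by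
    rw [card_compl, hP]

lemma codeg_le_codeg_filter_add (p : Finset V → Prop) [DecidablePred p]
    (hE : ∀ e ∈ E, #e = k + 1) (hP : #P = k) :
    codeg E P ≤ codeg (E.filter p) P + #{x ∈ Pᶜ | ¬p (insert x P)} := by
  have hsplit : codeg E P = codeg (E.filter p) P + codeg (E.filter (¬p ·)) P := by
    simp only [codeg, filter_filter]
    rw [← card_filter_add_card_filter_not (s := {e ∈ E | P ⊆ e}) p, filter_filter, filter_filter]
    simp only [and_comm]
  have hrest := codeg_le_card_filter_insert (E := E.filter (¬p ·))
    (fun e he => hE e (mem_filter.mp he).1) hP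
  rw [hsplit]
  refine add_le_add_right (hrest.trans (card_le_card fun x hx => ?_)) _
  simp only [mem_filter] at hx ⊢
  exact ⟨hx.1, hx.2.2⟩

lemma card_filter_mem_le_choose (hE : ∀ e ∈ E, #e = k + 1) (v : V) :
    #{e ∈ E | v ∈ e} ≤ (Fintype.card V - 1).choose k := by
  rw [← card_univ, ← card_erase_of_mem (mem_univ v), ← card_powersetCard]
  refine card_le_card_of_injOn (·.erase v) (fun e he => ?_) fun e₁ he₁ e₂ he₂ h => ?_
  · obtain ⟨heE, hve⟩ := mem_filter.mp he
    exact mem_powersetCard.mpr ⟨erase_subset_erase v (subset_univ e), by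
      rw [card_erase_of_mem hve, hE e heE]; rfl⟩
  · rw [← insert_erase (mem_filter.mp he₁).2, ← insert_erase (mem_filter.mp he₂).2]
    exact congrArg (insert v) h

end Codegree

section Pruning

variable (B : Finset (Finset V))

def link (v : V) : Finset V := {x | {v, x} ∈ B}

noncomputable def heavy (t : ℝ) : Finset V := {v | t < #(link B v)}

def pairsMeeting (D : Finset V) : Finset (Finset V) :=
  {P ∈ (univ : Finset V).powersetCard 2 | ¬Disjoint D P}

def prune (E : Finset (Finset V)) (D : Finset V) : Finset (Finset V) :=
  {e ∈ E | (∀ Q ∈ B, ¬Q ⊆ e) ∧ Disjoint D e}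

variable {B} {E : Finset (Finset V)} {D : Finset V}

lemma card_link_le (v : V) : #(link B v) ≤ #{Q ∈ B | v ∈ Q} := by
  refine card_le_card_of_injOn (fun x => {v, x}) (fun x hx => ?_) fun x _ y _ hxy => ?_
  · exact mem_filter.mpr ⟨(mem_filter.mp hx).2, mem_insert_self v {x}⟩
  · have hxy : ({v, x} : Finset V) = {v, y} := hxy
    have hx : x ∈ ({v, y} : Finset V) := hxy ▸ mem_insert_of_mem (mem_singleton_self x)
    have hy : y ∈ ({v, x} : Finset V) := hxy ▸ mem_insert_of_mem (mem_singleton_self y)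
    simp only [mem_insert, mem_singleton] at hx hy
    grind

lemma sum_card_link_le (hB : ∀ Q ∈ B, #Q = 2) : ∑ v, #(link B v) ≤ 2 * #B :=
  calc ∑ v, #(link B v) ≤ ∑ v, #{Q ∈ B | v ∈ Q} := sum_le_sum fun v _ => card_link_le v
    _ = ∑ Q ∈ B, #Q := by
      simp only [card_eq_sum_ones, sum_filter]
      rw [sum_comm]
      simp
    _ = 2 * #B := by rw [sum_congr rfl hB, sum_const, smul_eq_mul, mul_comm]

lemma mul_card_heavy_le (hB : ∀ Q ∈ B, #Q = 2) (t : ℝ) : t * #(heavy B t) ≤ 2 * #B := by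
  have hmarkov := card_nsmul_le_sum (heavy B t) (fun v => (#(link B v) : ℝ)) t
    fun v hv => (mem_filter.mp hv).2.le
  have htotal : ∑ v ∈ heavy B t, (#(link B v) : ℝ) ≤ ∑ v, (#(link B v) : ℝ) :=
    sum_le_sum_of_subset_of_nonneg (subset_univ _) fun _ _ _ => Nat.cast_nonneg _
  have hsum : (∑ v, #(link B v) : ℝ) ≤ 2 * #B := by exact_mod_cast sum_card_link_le hB
  rw [nsmul_eq_mul] at hmarkov
  linarith

lemma card_pairsMeeting_le : #(pairsMeeting D) ≤ #D * (Fintype.card V - 1) := by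
  have hcover : pairsMeeting D ⊆ D.biUnion fun v => (univ.erase v).image fun w => {v, w} := by
    intro P hP
    simp only [pairsMeeting, mem_filter, mem_powersetCard, subset_univ, true_and,
      not_disjoint_iff] at hP
    obtain ⟨hP2, v, hvD, hvP⟩ := hP
    obtain ⟨w, hw⟩ := card_eq_one.mp <| show #(P.erase v) = 1 by
      rw [card_erase_of_mem hvP, hP2]
    refine mem_biUnion.mpr ⟨v, hvD, mem_image.mpr ⟨w, ?_, ?_⟩⟩
    · exact mem_erase.mpr ⟨ne_of_mem_erase (hw ▸ mem_singleton_self w), mem_univ w⟩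
    · rw [← insert_erase hvP, hw]
  refine (card_le_card hcover).trans <| card_biUnion_le.trans <|
    sum_le_card_nsmul _ _ _ fun v _ => card_image_le.trans_eq ?_
  rw [card_erase_of_mem (mem_univ v), card_univ]

lemma filter_not_pruned_subset (hB : ∀ Q ∈ B, #Q = 2) {a c : V} (ha : a ∉ D) (hc : c ∉ D)
    (hac : {a, c} ∉ B) :
    {x ∈ ({a, c} : Finset V)ᶜ |
        ¬((∀ Q ∈ B, ¬Q ⊆ insert x {a, c}) ∧ Disjoint D (insert x {a, c}))} ⊆
      D ∪ (link B a ∪ link B c) := by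
  intro x hx
  simp only [mem_filter, mem_compl, not_and_or, not_forall, not_not, exists_prop,
    not_disjoint_iff] at hx
  simp only [mem_union, link, mem_filter, mem_univ, true_and]
  obtain ⟨hxac, ⟨Q, hQB, hQx⟩ | ⟨v, hvD, hvx⟩⟩ := hx
  · obtain ⟨y, z, hyz, rfl⟩ := card_eq_two.mp (hB Q hQB)
    have hy := hQx (mem_insert_self y {z})
    have hz := hQx (mem_insert_of_mem (mem_singleton_self z))
    simp only [mem_insert, mem_singleton] at hy hz hxac
    rcases hy with rfl | rfl | rfl <;> rcases hz with rfl | rfl | rfl <;>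
      simp_all [pair_comm]
  · simp only [mem_insert, mem_singleton] at hvx
    rcases hvx with rfl | rfl | rfl
    exacts [Or.inl hvD, absurd hvD ha, absurd hvD hc]

lemma codeg_le_codeg_prune_add (hE : ∀ e ∈ E, #e = 3) (hB : ∀ Q ∈ B, #Q = 2) {a c : V}
    (hne : a ≠ c) (ha : a ∉ D) (hc : c ∉ D) (hac : {a, c} ∉ B) :
    codeg E {a, c} ≤ codeg (prune B E D) {a, c} + (#D + (#(link B a) + #(link B c))) := by
  refine (codeg_le_codeg_filter_add _ hE (card_pair hne)).trans (add_le_add_right ?_ _)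
  refine (card_le_card (filter_not_pruned_subset hB ha hc hac)).trans ?_
  exact (card_union_le _ _).trans (add_le_add_right (card_union_le _ _) _)

lemma card_sdiff_prune_le (hE : ∀ e ∈ E, #e = 3) (hB : ∀ Q ∈ B, #Q = 2) :
    #(E \ prune B E D) ≤
      #B * (Fintype.card V - 2) + #D * (Fintype.card V - 1).choose 2 := by
  have hcover : E \ prune B E D ⊆
      B.biUnion (fun Q => {e ∈ E | Q ⊆ e}) ∪ D.biUnion (fun v => {e ∈ E | v ∈ e}) := by
    intro e he
    obtain ⟨heE, hep⟩ := mem_sdiff.mp he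
    simp only [prune, mem_filter, heE, true_and, not_and_or, not_forall, not_not,
      exists_prop, not_disjoint_iff] at hep
    simp only [mem_union, mem_biUnion, mem_filter, heE, true_and]
    exact hep
  refine (card_le_card hcover).trans <| (card_union_le _ _).trans <|
    add_le_add (card_biUnion_le.trans ?_) (card_biUnion_le.trans ?_)
  · exact sum_le_card_nsmul _ _ _ fun Q hQ => codeg_le_card_sub hE (hB Q hQ)
  · exact sum_le_card_nsmul _ _ _ fun v _ => card_filter_mem_le_choose hE v

end Pruning

section Estimates

variable {B E : Finset (Finset V)} {D : Finset V} {n : ℕ} {s : ℝ}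

noncomputable def lowPairs (E : Finset (Finset V)) (d : ℝ) : Finset (Finset V) :=
  {P ∈ univ.powersetCard 2 | (codeg E P : ℝ) < d}

lemma mem_lowPairs {d : ℝ} {P : Finset V} :
    P ∈ lowPairs E d ↔ #P = 2 ∧ (codeg E P : ℝ) < d := by
  simp [lowPairs]

lemma card_heavy_le (hB : ∀ Q ∈ B, #Q = 2) (hn : 0 < n) (hs : 0 < s)
    (hBcard : (#B : ℝ) ≤ s ^ 4 * n.choose 2) : (#(heavy B (s ^ 2 * n)) : ℝ) ≤ s ^ 2 * n := by
  have hmarkov := mul_card_heavy_le hB (s ^ 2 * n)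
  have hchoose : (n.choose 2 : ℝ) ≤ n * n / 2 := by
    rw [Nat.cast_choose_two]; linarith
  have hB' : (#B : ℝ) ≤ s ^ 4 * (n * n / 2) :=
    hBcard.trans (mul_le_mul_of_nonneg_left hchoose (by positivity))
  refine le_of_mul_le_mul_left ?_ (by positivity : 0 < s ^ 2 * n)
  linarith

lemma le_codeg_prune (hE : ∀ e ∈ E, #e = 3) (hB : ∀ Q ∈ B, #Q = 2) {t : ℝ}
    (hlink : ∀ v ∉ D, (#(link B v) : ℝ) ≤ t) {P : Finset V} (hP : #P = 2) (hPB : P ∉ B)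
    (hPD : Disjoint D P) : (codeg E P : ℝ) - (#D + 2 * t) ≤ codeg (prune B E D) P := by
  obtain ⟨a, c, hne, rfl⟩ := card_eq_two.mp hP
  have ha : a ∉ D := disjoint_right.mp hPD (mem_insert_self a {c})
  have hc : c ∉ D := disjoint_right.mp hPD (mem_insert_of_mem (mem_singleton_self c))
  have h : (codeg E {a, c} : ℝ) ≤ codeg (prune B E D) {a, c} +
      (#D + ((#(link B a) : ℝ) + #(link B c))) := by
    exact_mod_cast codeg_le_codeg_prune_add hE hB hne ha hc hPB
  linarith [hlink a ha, hlink c hc]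

lemma card_union_pairsMeeting_le {S : Finset (Finset V)} (hn : n = Fintype.card V) (hn1 : 1 ≤ n)
    {θ : ℝ} (hs0 : 0 ≤ s) (hs : s ≤ 1 / 2) (hS : (#S : ℝ) ≤ θ * n.choose 2)
    (hD : (#D : ℝ) ≤ s ^ 2 * n) : (#(S ∪ pairsMeeting D) : ℝ) ≤ (θ + s) * n.choose 2 := by
  have hunion := (Nat.cast_le (α := ℝ)).mpr <|
    (card_union_le S _).trans (add_le_add_right (card_pairsMeeting_le (D := D)) _)
  push_cast [← hn, Nat.cast_sub hn1] at hunion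
  have hmeet : (#D : ℝ) * (n - 1) ≤ s ^ 2 * n * (n - 1) :=
    mul_le_mul_of_nonneg_right hD (by simpa using hn1)
  have hchoose : (n.choose 2 : ℝ) = n * (n - 1) / 2 := Nat.cast_choose_two ℝ n
  have hsq : s ^ 2 * (n * (n - 1)) ≤ s / 2 * (n * (n - 1)) :=
    mul_le_mul_of_nonneg_right (by nlinarith) (mul_nonneg (by positivity) (by simpa using hn1))
  nlinarith

lemma card_sdiff_prune_le_mul_choose (hE : ∀ e ∈ E, #e = 3) (hB : ∀ Q ∈ B, #Q = 2)
    (hn : n = Fintype.card V) (h2 : 2 ≤ n) (hs0 : 0 ≤ s) (hs1 : s ≤ 1)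
    (hBcard : (#B : ℝ) ≤ s ^ 4 * n.choose 2) (hD : (#D : ℝ) ≤ s ^ 2 * n) :
    (#(E \ prune B E D) : ℝ) ≤ 8 * s ^ 2 * n.choose 3 := by
  have hrem := (Nat.cast_le (α := ℝ)).mpr (card_sdiff_prune_le hE hB (D := D))
  push_cast [← hn, Nat.cast_sub h2] at hrem
  have hpairs : (n.choose 2 : ℝ) * (n - 2) = 3 * n.choose 3 := by
    have h := congrArg (Nat.cast (R := ℝ)) (Nat.choose_succ_right_eq n 2)
    push_cast [Nat.cast_sub h2] at h
    linarith
  have hverts : (n : ℝ) * (n - 1).choose 2 = 3 * n.choose 3 := by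
    have h := Nat.add_one_mul_choose_eq (n - 1) 2
    rw [Nat.sub_add_cancel (by omega : 1 ≤ n)] at h
    exact_mod_cast by linarith
  have hBpart : (#B : ℝ) * (n - 2) ≤ s ^ 4 * (3 * n.choose 3) := by
    rw [← hpairs, ← mul_assoc]
    exact mul_le_mul_of_nonneg_right hBcard (by simpa using h2)
  have hDpart : (#D : ℝ) * (n - 1).choose 2 ≤ s ^ 2 * (3 * n.choose 3) := by
    rw [← hverts, ← mul_assoc]
    exact mul_le_mul_of_nonneg_right hD (by positivity)
  have hs42 : s ^ 4 ≤ s ^ 2 := by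
    have h : s ^ 2 ≤ 1 := by nlinarith
    nlinarith [mul_le_mul_of_nonneg_left h (sq_nonneg s)]
  nlinarith [Nat.cast_nonneg (α := ℝ) (n.choose 3)]

end Estimates

theorem exists_isStronglyDense_sdiff_le {n : ℕ} (hn : n = Fintype.card V) (h6 : 6 ≤ n)
    {μ s : ℝ} (hs0 : 0 < s) (hs : s ≤ 1 / 2) {E : Finset (Finset V)} (hE : ∀ e ∈ E, #e = 3)
    (hdense : IsDense E n μ (s ^ 4)) :
    ∃ E' ⊆ E, IsStronglyDense E' n (μ - 8 * s) (s ^ 4 + s) ∧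
      ((E \ E').card : ℝ) ≤ 8 * s ^ 2 * n.choose 3 := by
  obtain ⟨S, hS2, hScard, hSdeg⟩ := hdense
  set B := lowPairs E (μ * (n - 2))
  have hB2 : ∀ Q ∈ B, #Q = 2 := fun Q hQ => (mem_lowPairs.mp hQ).1
  have hBS : B ⊆ S := fun Q hQ => by
    by_contra hQS
    exact (hSdeg Q (hB2 Q hQ) hQS).not_gt (mem_lowPairs.mp hQ).2
  have hBcard : (#B : ℝ) ≤ s ^ 4 * n.choose 2 :=
    (Nat.cast_le.mpr (card_le_card hBS)).trans hScard
  set D := heavy B (s ^ 2 * n)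
  have hDcard : (#D : ℝ) ≤ s ^ 2 * n := card_heavy_le hB2 (by omega) hs0 hBcard
  have hlink : ∀ v ∉ D, (#(link B v) : ℝ) ≤ s ^ 2 * n := fun v hv =>
    not_lt.mp fun h => hv (mem_filter.mpr ⟨mem_univ v, h⟩)
  have hkept : ∀ P : Finset V, #P = 2 → P ∉ B → Disjoint D P →
      (μ - 8 * s) * (n - 2) ≤ codeg (prune B E D) P := by
    intro P hP hPB hPD
    have hdeg : μ * (n - 2) ≤ codeg E P := not_lt.mp fun h => hPB (mem_lowPairs.mpr ⟨hP, h⟩)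
    have hnR : (6 : ℝ) ≤ n := by exact_mod_cast h6
    have hs2 : s ^ 2 ≤ s / 2 := by nlinarith
    nlinarith [le_codeg_prune hE hB2 hlink hP hPB hPD]
  refine ⟨prune B E D, filter_subset _ _, ⟨⟨S ∪ pairsMeeting D, ?_, ?_, ?_⟩, ?_⟩,
    card_sdiff_prune_le_mul_choose hE hB2 hn (by omega) hs0.le (by linarith) hBcard hDcard⟩
  · intro P hP
    rcases mem_union.mp hP with hPS | hPD
    exacts [hS2 P hPS, (mem_powersetCard.mp (mem_filter.mp hPD).1).2]
  · exact card_union_pairsMeeting_le hn (by omega) hs0.le hs hScard hDcard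
  · intro P hP hPS'
    refine hkept P hP (fun hPB => hPS' (mem_union_left _ (hBS hPB))) ?_
    by_contra hPD
    exact hPS' (mem_union_right _ (mem_filter.mpr ⟨mem_powersetCard.mpr ⟨subset_univ P, hP⟩, hPD⟩))
  · intro P hP hpos
    obtain ⟨e, he⟩ := card_pos.mp hpos
    obtain ⟨hep, hPe⟩ := mem_filter.mp he
    obtain ⟨-, hBe, hDe⟩ := mem_filter.mp hep
    exact hkept P hP (fun hPB => hBe P hPB hPe) (hDe.mono_right hPe)

lemma isStronglyDense_empty {n : ℕ} (hn : 2 ≤ n) {μ θ : ℝ} (hμ : μ ≤ 0) (hθ : 0 ≤ θ) :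
    IsStronglyDense (∅ : Finset (Finset V)) n μ θ := by
  have hn' : (2 : ℝ) ≤ n := by exact_mod_cast hn
  refine ⟨⟨∅, by simp, by simpa using by positivity, fun P _ _ => ?_⟩, fun P _ h => by simp at h⟩
  simpa using mul_nonpos_of_nonpos_of_nonneg hμ (by linarith)

end Hypergraph

theorem strongly_dense_subgraph_general {V : Type*} [Fintype V] [DecidableEq V]
    (n : ℕ) (hn : n = Fintype.card V) (h6 : 6 ≤ n)
    (μ θ : ℝ) (hμ1 : μ < 1) (hθ0 : 0 < θ)
    (E : Finset (Finset V)) (h3 : ∀ e ∈ E, e.card = 3)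
    (hdense : IsDense E n μ θ) :
    ∃ E' ⊆ E, IsStronglyDense E' n (μ - 8 * θ ^ ((1 : ℝ) / 4)) (θ + θ ^ ((1 : ℝ) / 4)) ∧
      ((E \ E').card : ℝ) ≤ 8 * θ ^ ((1 : ℝ) / 2) * n.choose 3 := by
  set s := θ ^ ((1 : ℝ) / 4) with hs
  have hs0 : 0 < s := Real.rpow_pos_of_pos hθ0 _
  have hθ : θ = s ^ 4 := by rw [hs, ← Real.rpow_natCast, ← Real.rpow_mul hθ0.le]; norm_num
  have hhalf : θ ^ ((1 : ℝ) / 2) = s ^ 2 := by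
    rw [hs, ← Real.rpow_natCast, ← Real.rpow_mul hθ0.le]; norm_num
  rw [hhalf, hθ]
  rw [hθ] at hdense
  rcases le_or_gt s (1 / 2) with hsmall | hlarge
  · exact Hypergraph.exists_isStronglyDense_sdiff_le hn h6 hs0 hsmall h3 hdense
  · refine ⟨∅, empty_subset E,
      Hypergraph.isStronglyDense_empty (by omega) (by linarith) (by positivity), ?_⟩
    have hE : (#E : ℝ) ≤ n.choose 3 := by
      exact_mod_cast hn ▸ Set.Sized.card_le (𝒜 := E) fun e he => h3 e he
    have hs2 : 1 ≤ 8 * s ^ 2 := by nlinarith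
    rw [sdiff_empty]
    nlinarith [Nat.cast_nonneg (α := ℝ) (n.choose 3)]

/-- Every `(μ, θ)`-dense 3-graph on `n ≥ 6` vertices has a spanning subgraph
which is strongly `(μ − 8θ^{1/4}, θ + θ^{1/4})`-dense, obtained by removing at
most `8θ^{1/2}·(n choose 3)` edges. -/
theorem strongly_dense_subgraph {V : Type*} [Fintype V] [DecidableEq V]
    (n : ℕ) (hn : n = Fintype.card V) (h6 : 6 ≤ n)
    (μ θ : ℝ) (hμ0 : 0 < μ) (hμ1 : μ < 1) (hθ0 : 0 < θ) (hθ1 : θ < 1)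
    (E : Finset (Finset V)) (h3 : ∀ e ∈ E, e.card = 3)
    (hdense : IsDense E n μ θ) :
    ∃ E' ⊆ E, IsStronglyDense E' n (μ - 8 * θ ^ ((1 : ℝ) / 4)) (θ + θ ^ ((1 : ℝ) / 4)) ∧
      ((E \ E').card : ℝ) ≤ 8 * θ ^ ((1 : ℝ) / 2) * n.choose 3 :=
  strongly_dense_subgraph_general n hn h6 μ θ hμ1 hθ0 E h3 hdense
end
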